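/- For a context-free grammar G=(N,Σ,P,S) with no ε-rules and for every w∈L(G), the length of a shortest derivation of w in G is at most (2|w|−1)·|N|. -/
import Mathlib



namespace Ocfg

/-- A symbol: nonterminal or terminal. -/
inductive Sym (N T : Type) : Type
  | nt : N → Sym N T
  | tm : T → Sym N T

/-- An (ordered) context-free grammar: each nonterminal has an ordered
list of right-hand sides; `start` is the start nonterminal. -/
structure OCFG (N T : Type) : Type where
  prods : N → List (List (Sym N T))
  start : N

/-- Ordered ranked trees used as parse trees: terminal leaves, ε-leaves,
and internal nodes labelled by a nonterminal together with the index of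
the rule applied there. -/
inductive PTree (N T : Type) : Type
  | leaf : T → PTree N T
  | eps  : PTree N T
  | node : N → ℕ → List (PTree N T) → PTree N T

mutual
/-- `ParseFrom G A w t`: `t` is a parse tree with root nonterminal `A`
and yield `w`. -/
inductive ParseFrom {N T : Type} (G : OCFG N T) : N → List T → PTree N T → Prop
  | epsNode (A : N) (i : ℕ) :
      (G.prods A)[i]? = some [] →
      ParseFrom G A [] (PTree.node A i [PTree.eps])
  | node (A : N) (i : ℕ) (r : List (Sym N T)) (w : List T) (cs : List (PTree N T)) :
      (G.prods A)[i]? = some r → r ≠ [] → ParseSeq G r w cs →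
      ParseFrom G A w (PTree.node A i cs)

/-- `ParseSeq G r w cs`: the trees `cs` match, in order, the symbols of `r`,
with concatenated yield `w`. -/
inductive ParseSeq {N T : Type} (G : OCFG N T) : List (Sym N T) → List T → List (PTree N T) → Prop
  | nil : ParseSeq G [] [] []
  | consTm (a : T) (r : List (Sym N T)) (w : List T) (cs : List (PTree N T)) :
      ParseSeq G r w cs →
      ParseSeq G (Sym.tm a :: r) (a :: w) (PTree.leaf a :: cs)
  | consNt (A : N) (t : PTree N T) (wA : List T) (r : List (Sym N T)) (w : List T)
      (cs : List (PTree N T)) :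
      ParseFrom G A wA t → ParseSeq G r w cs →
      ParseSeq G (Sym.nt A :: r) (wA ++ w) (t :: cs)
end

/-- The set `P_G(w)` of parse trees of `w`. -/
def parseTrees {N T : Type} (G : OCFG N T) (w : List T) : Set (PTree N T) :=
  {t | ParseFrom G G.start w t}

/-- `n(t)`: the sequence of rule indices of `t`, in pre-order. -/
def PTree.idxSeq {N T : Type} : PTree N T → List ℕ
  | .leaf _ => []
  | .eps => []
  | .node _ i cs => i :: (cs.attach.map (fun c => PTree.idxSeq c.1)).flatten
decreasing_by
  have := List.sizeOf_lt_of_mem c.2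
  simp_wf
  omega

/-- The order `≺_G` on parse trees: lexicographic comparison of the
pre-order rule-index sequences. -/
def treeLT {N T : Type} (t₁ t₂ : PTree N T) : Prop :=
  List.Lex (· < ·) t₁.idxSeq t₂.idxSeq

/-- One-step derivation relation `⇒` of the underlying CFG. -/
def OCFG.Step {N T : Type} (G : OCFG N T) (u v : List (Sym N T)) : Prop :=
  ∃ (u₁ u₂ : List (Sym N T)) (A : N) (r : List (Sym N T)),
    r ∈ G.prods A ∧ u = u₁ ++ Sym.nt A :: u₂ ∧ v = u₁ ++ r ++ u₂

/-- `⇒*`. -/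
def OCFG.Derives {N T : Type} (G : OCFG N T) : List (Sym N T) → List (Sym N T) → Prop :=
  Relation.ReflTransGen G.Step

/-- A nonterminal is useful if it occurs in some sentential form derivable from
the start symbol and derives some terminal string. -/
def Useful {N T : Type} (G : OCFG N T) (A : N) : Prop :=
  (∃ u₁ u₂ : List (Sym N T), G.Derives [Sym.nt G.start] (u₁ ++ Sym.nt A :: u₂)) ∧
  (∃ w : List T, G.Derives [Sym.nt A] (w.map Sym.tm))

/-- `G` is cyclic if `A ⇒⁺ A` for some nonterminal `A`. -/
def Cyclic {N T : Type} (G : OCFG N T) : Prop :=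
  ∃ A : N, Relation.TransGen G.Step [Sym.nt A] [Sym.nt A]

/-- `G` has no ε-rules. -/
def NoEpsRules {N T : Type} (G : OCFG N T) : Prop :=
  ∀ (A : N) (r : List (Sym N T)), r ∈ G.prods A → r ≠ []

/-- A unit-rule step: `A → B` is a rule of `G`. -/
def UnitStep {N T : Type} (G : OCFG N T) (A B : N) : Prop :=
  [Sym.nt B] ∈ G.prods A

/-- `G` has a cycle of unit rules. -/
def HasUnitCycle {N T : Type} (G : OCFG N T) : Prop :=
  ∃ A : N, Relation.TransGen (UnitStep G) A A

/-- `G` is well-ordered: for every string `w`, every nonempty subset of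
`P_G(w)` has a `≺_G`-least element. -/
def WellOrderedG {N T : Type} (G : OCFG N T) : Prop :=
  ∀ (w : List T) (Φ : Set (PTree N T)), Φ ⊆ parseTrees G w → Φ.Nonempty →
    ∃ t ∈ Φ, ∀ t' ∈ Φ, t = t' ∨ treeLT t t'

/-- `t` is the `≺_G`-least parse tree of `w`. -/
def IsLeastTree {N T : Type} (G : OCFG N T) (w : List T) (t : PTree N T) : Prop :=
  ParseFrom G G.start w t ∧ ∀ t', ParseFrom G G.start w t' → t = t' ∨ treeLT t t'

/-- `G` has least parse trees. -/
def HasLeastTrees {N T : Type} (G : OCFG N T) : Prop :=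
  ∀ w : List T, (parseTrees G w).Nonempty → ∃ t, IsLeastTree G w t

/-- Derivations of a given length (number of steps). -/
inductive DerivesIn {N T : Type} (G : OCFG N T) : List (Sym N T) → List (Sym N T) → ℕ → Prop
  | refl (u : List (Sym N T)) : DerivesIn G u u 0
  | step (u v w : List (Sym N T)) (n : ℕ) :
      G.Step u v → DerivesIn G v w n → DerivesIn G u w (n + 1)

/-- Number of rule applications in a parse tree (= length of the
corresponding leftmost derivation). -/
def PTree.numRules {N T : Type} : PTree N T → ℕ
  | .leaf _ => 0
  | .eps => 0
  | .node _ _ cs => 1 + ((cs.attach.map (fun c => PTree.numRules c.1)).foldr (· + ·) 0)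
decreasing_by
  have := List.sizeOf_lt_of_mem c.2
  simp_wf
  omega

/-- Height of a tree: a single leaf has height 0. -/
def PTree.height {N T : Type} : PTree N T → ℕ
  | .leaf _ => 0
  | .eps => 0
  | .node _ _ cs => 1 + ((cs.attach.map (fun c => PTree.height c.1)).foldr max 0)
decreasing_by
  have := List.sizeOf_lt_of_mem c.2
  simp_wf
  omega

/-- The language of `G`. -/
def langOf {N T : Type} (G : OCFG N T) : Language T :=
  {w | ∃ t, ParseFrom G G.start w t}

end Ocfg

open Ocfg

namespace Ocfg
variable {N T : Type}

lemma step_append {G : OCFG N T} {u v : List (Sym N T)} (x y : List (Sym N T))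
    (h : G.Step u v) : G.Step (x ++ u ++ y) (x ++ v ++ y) := by
  obtain ⟨u1, u2, A, r, hr, hu, hv⟩ := h
  exact ⟨x ++ u1, u2 ++ y, A, r, hr, by simp [hu], by simp [hv]⟩

lemma derivesIn_append {G : OCFG N T} {u v : List (Sym N T)} {n : ℕ}
    (x y : List (Sym N T)) (h : DerivesIn G u v n) :
    DerivesIn G (x ++ u ++ y) (x ++ v ++ y) n := by
  induction h with
  | refl u => exact DerivesIn.refl _
  | step u v w n hs hd ih => exact DerivesIn.step _ _ _ _ (step_append x y hs) ih

lemma derivesIn_trans {G : OCFG N T} {a b c : List (Sym N T)} {n m : ℕ}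
    (h1 : DerivesIn G a b n) (h2 : DerivesIn G b c m) : DerivesIn G a c (n + m) := by
  induction h1 with
  | refl u => simpa using h2
  | step u v w n hs hd ih =>
      have := DerivesIn.step u v c (n + m) hs (ih h2)
      simpa [Nat.add_right_comm] using this

lemma derivesIn_compose {G : OCFG N T} {u u' v v' : List (Sym N T)} {n m : ℕ}
    (h1 : DerivesIn G u u' n) (h2 : DerivesIn G v v' m) :
    DerivesIn G (u ++ v) (u' ++ v') (n + m) := by
  have ha : DerivesIn G (u ++ v) (u' ++ v) n := by
    simpa using derivesIn_append ([] : List (Sym N T)) v h1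
  have hb : DerivesIn G (u' ++ v) (u' ++ v') m := by
    simpa using derivesIn_append u' ([] : List (Sym N T)) h2
  exact derivesIn_trans ha hb

lemma no_step_terminal {G : OCFG N T} {w : List T} {v : List (Sym N T)}
    (h : G.Step (w.map Sym.tm) v) : False := by
  obtain ⟨u1, u2, A, r, hr, hu, hv⟩ := h
  have hmem : (Sym.nt A : Sym N T) ∈ w.map Sym.tm := by
    rw [hu]; simp
  obtain ⟨a, _, ha⟩ := List.mem_map.mp hmem
  cases ha

lemma derivesIn_terminal {G : OCFG N T} {w : List T} {v : List (Sym N T)} {n : ℕ}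
    (h : DerivesIn G (w.map Sym.tm) v n) : v = w.map Sym.tm ∧ n = 0 := by
  cases h with
  | refl => exact ⟨rfl, rfl⟩
  | step u v' w' n hs hd => exact absurd hs no_step_terminal

lemma step_length {G : OCFG N T} (hne : NoEpsRules G) {u v : List (Sym N T)}
    (h : G.Step u v) : u.length ≤ v.length := by
  obtain ⟨u1, u2, A, r, hr, hu, hv⟩ := h
  have : r ≠ [] := hne A r hr
  have hr1 : 1 ≤ r.length := by
    cases r with
    | nil => exact absurd rfl this
    | cons a l => simp
  subst hu hv; simp; omega

lemma derivesIn_length {G : OCFG N T} (hne : NoEpsRules G) {u v : List (Sym N T)} {n : ℕ}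
    (h : DerivesIn G u v n) : u.length ≤ v.length := by
  induction h with
  | refl u => exact le_refl _
  | step u v w n hs hd ih => exact le_trans (step_length hne hs) ih

lemma derivesIn_split {G : OCFG N T} : ∀ {s w : List (Sym N T)} {n : ℕ},
    DerivesIn G s w n → ∀ u v : List (Sym N T), s = u ++ v →
    ∃ w1 w2 n1 n2, w = w1 ++ w2 ∧ n1 + n2 = n ∧ DerivesIn G u w1 n1 ∧ DerivesIn G v w2 n2 := by
  intro s w n h
  induction h with
  | refl s =>
      intro u v hs
      exact ⟨u, v, 0, 0, hs, rfl, DerivesIn.refl u, DerivesIn.refl v⟩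
  | step s z w n hs hd ih =>
      intro u v hsv
      obtain ⟨u1, u2, A, r, hr, he, hz⟩ := hs
      rw [hsv] at he
      rcases List.append_eq_append_iff.mp he with ⟨a', h1, h2⟩ | ⟨c', h1, h2⟩
      · -- u1 = u ++ a', v = a' ++ nt A :: u2 : rewrite inside v
        have hz' : z = u ++ (a' ++ r ++ u2) := by rw [hz, h1]; simp
        obtain ⟨w1, w2, n1, n2, hw, hn, d1, d2⟩ := ih u (a' ++ r ++ u2) hz'
        refine ⟨w1, w2, n1, n2 + 1, hw, by omega, d1, ?_⟩
        refine DerivesIn.step _ _ _ _ ⟨a', u2, A, r, hr, h2, rfl⟩ d2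
      · -- u = u1 ++ c', nt A :: u2 = c' ++ v
        cases c' with
        | nil =>
            -- u = u1, v = nt A :: u2
            simp at h1 h2
            have hz' : z = u ++ (r ++ u2) := by rw [hz, h1]; simp
            obtain ⟨w1, w2, n1, n2, hw, hn, d1, d2⟩ := ih u (r ++ u2) hz'
            refine ⟨w1, w2, n1, n2 + 1, hw, by omega, d1, ?_⟩
            exact DerivesIn.step _ _ _ _ ⟨[], u2, A, r, hr, by simp [← h2], by simp⟩ d2
        | cons x c'' =>
            -- x = nt A, u2 = c'' ++ v, rewrite inside u
            have hx : x = Sym.nt A ∧ u2 = c'' ++ v := by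
              constructor
              · exact (List.cons_eq_cons.mp h2).1.symm
              · exact (List.cons_eq_cons.mp h2).2
            obtain ⟨hx1, hx2⟩ := hx
            have hz' : z = (u1 ++ r ++ c'') ++ v := by rw [hz, hx2]; simp
            obtain ⟨w1, w2, n1, n2, hw, hn, d1, d2⟩ := ih (u1 ++ r ++ c'') v hz'
            refine ⟨w1, w2, n1 + 1, n2, hw, by omega, ?_, d2⟩
            exact DerivesIn.step _ _ _ _ ⟨u1, c'', A, r, hr, by rw [h1, hx1], rfl⟩ d1

lemma exists_min_deriv {G : OCFG N T} {u v : List (Sym N T)}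
    (h : ∃ n, DerivesIn G u v n) :
    ∃ n, DerivesIn G u v n ∧ ∀ m, DerivesIn G u v m → n ≤ m := by
  classical
  exact ⟨Nat.find h, Nat.find_spec h, fun m hm => Nat.find_le hm⟩

end Ocfg
namespace Ocfg
variable {N T : Type}

lemma seqBound {G : OCFG N T} [Fintype N] (n₀ : ℕ)
    (H : ∀ (B : N) (w' : List T) m, m < n₀ → DerivesIn G [Sym.nt B] (w'.map Sym.tm) m →
      ∃ m', DerivesIn G [Sym.nt B] (w'.map Sym.tm) m' ∧
        m' + Fintype.card N ≤ 2 * w'.length * Fintype.card N) :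
    ∀ (r : List (Sym N T)) (w : List T) m, m < n₀ → DerivesIn G r (w.map Sym.tm) m →
    ∃ m', DerivesIn G r (w.map Sym.tm) m' ∧
      m' + r.length * Fintype.card N ≤ 2 * w.length * Fintype.card N := by
  intro r
  induction r with
  | nil =>
      intro w m hm hd
      have h0 : DerivesIn G (([] : List T).map Sym.tm) (w.map Sym.tm) m := by simpa using hd
      obtain ⟨hv, -⟩ := derivesIn_terminal h0
      have hw : w = [] := by
        cases w with
        | nil => rfl
        | cons a t => simp at hv
      subst hw
      exact ⟨0, DerivesIn.refl _, by simp⟩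
  | cons s r' ih =>
      intro w m hm hd
      obtain ⟨w1, w2, n1, n2, hw, hn, d1, d2⟩ := derivesIn_split hd [s] r' rfl
      obtain ⟨wa, wb, hwab, hw1, hw2⟩ := List.map_eq_append_iff.mp hw
      subst hwab
      rw [← hw1] at d1
      rw [← hw2] at d2
      obtain ⟨m2, d2', h2⟩ := ih wb n2 (by omega) d2
      cases s with
      | tm a =>
          have d1' : DerivesIn G (([a] : List T).map Sym.tm) (wa.map Sym.tm) n1 := by
            simpa using d1
          obtain ⟨hv, -⟩ := derivesIn_terminal d1'
          have hwa : wa = [a] := by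
            cases wa with
            | nil => simp at hv
            | cons x t =>
              simp only [List.map] at hv
              obtain ⟨hx, ht⟩ := List.cons_eq_cons.mp hv
              cases hx
              simp only [List.map_eq_nil_iff] at ht
              simp [ht]
          subst hwa
          refine ⟨m2, ?_, ?_⟩
          · have := derivesIn_compose (DerivesIn.refl [Sym.tm a]) d2'
            simpa using this
          · have e1 : (Sym.tm a :: r').length * Fintype.card N
                = r'.length * Fintype.card N + Fintype.card N := by simp; ring
            have e2 : 2 * (([a] : List T) ++ wb).length * Fintype.card N
                = 2 * wb.length * Fintype.card N + 2 * Fintype.card N := by simp; ring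
            omega
      | nt B =>
          obtain ⟨m1, d1', h1⟩ := H B wa n1 (by omega) d1
          refine ⟨m1 + m2, ?_, ?_⟩
          · have := derivesIn_compose d1' d2'
            simpa using this
          · have e1 : (Sym.nt B :: r').length * Fintype.card N
                = r'.length * Fintype.card N + Fintype.card N := by simp; ring
            have e2 : 2 * (wa ++ wb).length * Fintype.card N
                = 2 * wa.length * Fintype.card N + 2 * wb.length * Fintype.card N := by
              simp; ring
            omega

end Ocfg
namespace Ocfg
variable {N T : Type}

open Classical in
lemma mainBound {G : OCFG N T} [Fintype N] (hne : NoEpsRules G) :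
    ∀ (n : ℕ) (A : N) (w : List T), DerivesIn G [Sym.nt A] (w.map Sym.tm) n →
    (∀ m, DerivesIn G [Sym.nt A] (w.map Sym.tm) m → n ≤ m) →
    n + 2 * Fintype.card N ≤ 2 * w.length * Fintype.card N +
      (Finset.univ.filter
        (fun C : N => ∃ m ≤ n, DerivesIn G [Sym.nt C] (w.map Sym.tm) m)).card := by
  intro n
  induction n using Nat.strong_induction_on with
  | _ n IH =>
  intro A w hd hmin
  have hA : A ∈ Finset.univ.filter
      (fun C : N => ∃ m ≤ n, DerivesIn G [Sym.nt C] (w.map Sym.tm) m) :=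
    Finset.mem_filter.mpr ⟨Finset.mem_univ _, n, le_refl n, hd⟩
  have hcard1 : 1 ≤ (Finset.univ.filter
      (fun C : N => ∃ m ≤ n, DerivesIn G [Sym.nt C] (w.map Sym.tm) m)).card :=
    Finset.card_pos.mpr ⟨A, hA⟩
  generalize hW : w.map Sym.tm = W at hd
  cases hd with
  | refl =>
      -- [Sym.nt A] = w.map Sym.tm : impossible
      exfalso
      cases w with
      | nil => simp at hW
      | cons a t => simp at hW
  | step u v W' k hs hd' =>
      subst hW
      obtain ⟨u1, u2, A', r, hr, he, hv⟩ := hs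
      have hu1 : u1 = [] ∧ A = A' ∧ u2 = [] := by
        cases u1 with
        | nil =>
            obtain ⟨h1, h2⟩ := List.cons_eq_cons.mp he.symm
            exact ⟨rfl, by cases h1; rfl, h2⟩
        | cons x t =>
            exfalso
            have := congrArg List.length he
            simp at this
      obtain ⟨h1, h2, h3⟩ := hu1
      subst h1 h2 h3
      simp only [List.nil_append, List.append_nil] at hv
      rw [hv] at hd'
      -- hd' : DerivesIn G r (w.map Sym.tm) k
      have hrne : r ≠ [] := hne A r hr
      have hstepAr : G.Step [Sym.nt A] r := ⟨[], [], A, r, hr, by simp, by simp⟩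
      match r, hrne, hr, hd', hstepAr with
      | [Sym.tm a], _, hr, hd', hstepAr =>
          have h0 : DerivesIn G (([a] : List T).map Sym.tm) (w.map Sym.tm) k := by
            simpa using hd'
          obtain ⟨hveq, hk0⟩ := derivesIn_terminal h0
          have hw : w = [a] := by
            have h5 : List.map Sym.tm w = List.map (Sym.tm : T → Sym N T) [a] := by simpa using hveq
            exact List.map_injective_iff.mpr (fun a b h => by cases h; rfl) h5
          subst hw hk0
          have e2 : 2 * ([a] : List T).length * Fintype.card N = 2 * Fintype.card N := by
            simp
          omega
      | [Sym.nt B], _, hr, hd', hstepAr =>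
          have hminB : ∀ m, DerivesIn G [Sym.nt B] (w.map Sym.tm) m → k ≤ m := by
            intro m hm
            have : DerivesIn G [Sym.nt A] (w.map Sym.tm) (m + 1) :=
              DerivesIn.step _ _ _ _ hstepAr hm
            have := hmin (m + 1) this
            omega
          have hIH := IH k (by omega) B w hd' hminB
          have hsub : (Finset.univ.filter
              (fun C : N => ∃ m ≤ k, DerivesIn G [Sym.nt C] (w.map Sym.tm) m)) ⊂
              (Finset.univ.filter
              (fun C : N => ∃ m ≤ k + 1, DerivesIn G [Sym.nt C] (w.map Sym.tm) m)) := by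
            constructor
            · intro C hC
              obtain ⟨-, m, hmk, hdm⟩ := Finset.mem_filter.mp hC
              exact Finset.mem_filter.mpr ⟨Finset.mem_univ _, m, by omega, hdm⟩
            · intro hsub'
              have := hsub' hA
              obtain ⟨-, m, hmk, hdm⟩ := Finset.mem_filter.mp this
              have := hmin m hdm
              omega
          have hlt := Finset.card_lt_card hsub
          omega
      | s1 :: s2 :: r'', _, hr, hd', hstepAr =>
          have H : ∀ (B : N) (w' : List T) m, m < k + 1 →
              DerivesIn G [Sym.nt B] (w'.map Sym.tm) m →
              ∃ m', DerivesIn G [Sym.nt B] (w'.map Sym.tm) m' ∧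
                m' + Fintype.card N ≤ 2 * w'.length * Fintype.card N := by
            intro B w' m hmn hdm
            obtain ⟨m₀, hd₀, hmin₀⟩ := exists_min_deriv ⟨m, hdm⟩
            have hm₀ : m₀ < k + 1 := lt_of_le_of_lt (hmin₀ m hdm) hmn
            have hIH := IH m₀ hm₀ B w' hd₀ hmin₀
            have hcle : (Finset.univ.filter
                (fun C : N => ∃ m ≤ m₀, DerivesIn G [Sym.nt C] (w'.map Sym.tm) m)).card ≤
                Fintype.card N := by
              simpa using Finset.card_filter_le Finset.univ _
            exact ⟨m₀, hd₀, by omega⟩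
          obtain ⟨m', hd'', hb⟩ := seqBound (k + 1) H (s1 :: s2 :: r'') w k (by omega) hd'
          have hstep : DerivesIn G [Sym.nt A] (w.map Sym.tm) (m' + 1) :=
            DerivesIn.step _ _ _ _ hstepAr hd''
          have hle := hmin (m' + 1) hstep
          have hmul : 2 * Fintype.card N ≤ (s1 :: s2 :: r'').length * Fintype.card N :=
            Nat.mul_le_mul_right _ (by simp)
          omega

end Ocfg

open Ocfg

/-- In a CFG with no ε-rules, every `w ∈ L(G)` has a derivation
of length at most `(2|w| − 1)·|N|`. -/
theorem stmt8 {N T : Type} [Fintype N] [Fintype T] (G : OCFG N T)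
    (hne : NoEpsRules G) (w : List T)
    (hw : ∃ n : ℕ, DerivesIn G [Sym.nt G.start] (w.map Sym.tm) n) :
    ∃ n : ℕ, DerivesIn G [Sym.nt G.start] (w.map Sym.tm) n ∧
      n ≤ (2 * w.length - 1) * Fintype.card N := by
  classical
  obtain ⟨n₀, hd₀, hmin₀⟩ := exists_min_deriv hw
  have hmain := mainBound hne n₀ G.start w hd₀ hmin₀
  have hcle : (Finset.univ.filter
      (fun C : N => ∃ m ≤ n₀, DerivesIn G [Sym.nt C] (w.map Sym.tm) m)).card ≤
      Fintype.card N := by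
    simpa using Finset.card_filter_le Finset.univ _
  have hlen : 1 ≤ w.length := by
    have := derivesIn_length hne hd₀
    simpa using this
  obtain ⟨b, hb⟩ : ∃ b, w.length = b + 1 := ⟨w.length - 1, by omega⟩
  have e : 2 * w.length * Fintype.card N
      = (2 * w.length - 1) * Fintype.card N + Fintype.card N := by
    have h1 : 2 * w.length - 1 = 2 * b + 1 := by omega
    rw [h1, hb]; ring
  exact ⟨n₀, hd₀, by omega⟩
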